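/- arXiv:2312.15394 — 2 statements merged into one kernel-verified Lean document; each statement's English description precedes it below -/
import Mathlib

section
/- Let A, B be n×n complex positive definite matrices. For every t ∈ (0, 1), the spectral geometric mean and the Wasserstein mean satisfy A ♮_t B ⪯ A ◇_t B in the near order; moreover, equality A ♮_t B = A ◇_t B for some t ∈ (0,1) holds if and only if A = B. -/
open scoped ComplexOrder Matrix

noncomputable section

/-- Real power of a (positive definite) matrix via the continuous functional calculus. -/
def mpow {n : ℕ} (A : Matrix (Fin n) (Fin n) ℂ) (t : ℝ) : Matrix (Fin n) (Fin n) ℂ :=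
  cfc (fun x : ℝ => x ^ t) A

/-- The matrix logarithm of a (positive definite) matrix via the continuous functional calculus. -/
def mlog {n : ℕ} (A : Matrix (Fin n) (Fin n) ℂ) : Matrix (Fin n) (Fin n) ℂ :=
  cfc Real.log A

/-- The metric geometric mean `A ♯ₜ B = A^{1/2} (A^{-1/2} B A^{-1/2})^t A^{1/2}`.
`A ♯ B` is `gmean A B (1/2)`. -/
def gmean {n : ℕ} (A B : Matrix (Fin n) (Fin n) ℂ) (t : ℝ) : Matrix (Fin n) (Fin n) ℂ :=
  mpow A (1/2) * mpow (mpow A (-(1/2)) * B * mpow A (-(1/2))) t * mpow A (1/2)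

/-- The Loewner order: `A ≤ B` iff `B - A` is positive semidefinite. -/
def LoewnerLE {n : ℕ} (A B : Matrix (Fin n) (Fin n) ℂ) : Prop :=
  (B - A).PosSemidef

/-- The near order: `A ⪯ B` iff `I ≤ A⁻¹ ♯ B` in the Loewner order. -/
def NearLE {n : ℕ} (A B : Matrix (Fin n) (Fin n) ℂ) : Prop :=
  LoewnerLE 1 (gmean A⁻¹ B (1/2))

/-- The spectral geometric mean `A ♮ₜ B = (A⁻¹ ♯ B)^t A (A⁻¹ ♯ B)^t`. -/
def smean {n : ℕ} (A B : Matrix (Fin n) (Fin n) ℂ) (t : ℝ) : Matrix (Fin n) (Fin n) ℂ :=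
  mpow (gmean A⁻¹ B (1/2)) t * A * mpow (gmean A⁻¹ B (1/2)) t

/-- The Wasserstein mean `A ◇ₜ B = [(1-t)I + t(A⁻¹ ♯ B)] A [(1-t)I + t(A⁻¹ ♯ B)]`. -/
def wmean {n : ℕ} (A B : Matrix (Fin n) (Fin n) ℂ) (t : ℝ) : Matrix (Fin n) (Fin n) ℂ :=
  (((1 - t : ℝ) : ℂ) • (1 : Matrix (Fin n) (Fin n) ℂ) + ((t : ℝ) : ℂ) • gmean A⁻¹ B (1/2)) * A *
    (((1 - t : ℝ) : ℂ) • (1 : Matrix (Fin n) (Fin n) ℂ) + ((t : ℝ) : ℂ) • gmean A⁻¹ B (1/2))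

/-- The arithmetic mean `A ∇ₜ B = (1-t)A + tB`. -/
def amean {n : ℕ} (A B : Matrix (Fin n) (Fin n) ℂ) (t : ℝ) : Matrix (Fin n) (Fin n) ℂ :=
  ((1 - t : ℝ) : ℂ) • A + ((t : ℝ) : ℂ) • B

/-- The matrix absolute value `|X| = (XᴴX)^{1/2}`. -/
def matAbs {n : ℕ} (X : Matrix (Fin n) (Fin n) ℂ) : Matrix (Fin n) (Fin n) ℂ :=
  mpow (Xᴴ * X) (1/2)

/-- The eigenvalues of a Hermitian matrix listed in nonincreasing order:
`eigDesc hA i` is `λ_{i+1}(A)`, so `eigDesc hA 0 = λ₁(A) ≥ eigDesc hA 1 = λ₂(A) ≥ ⋯`. -/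
def eigDesc {n : ℕ} {A : Matrix (Fin n) (Fin n) ℂ} (hA : A.IsHermitian) : Fin n → ℝ :=
  fun i => (hA.eigenvalues ∘ Tuple.sort hA.eigenvalues) i.rev


/-!
Put `C = A⁻¹ ♯ B`, so that `C A C = B`, `A ♮ₜ B = Cᵗ A Cᵗ` and `A ◇ₜ B = q(C) A q(C)` with
`q(x) = 1 - t + t x`. Functions of `C` commute, so `Z = g(C)` with `g(x) = q(x) x⁻ᵗ` satisfies
`Z (A ♮ₜ B) Z = A ◇ₜ B`; as `S⁻¹ ♯ W` is the unique positive definite solution `Z` of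
`Z S Z = W`, this identifies `(A ♮ₜ B)⁻¹ ♯ (A ◇ₜ B)` with `g(C)`. The near-order inequality
`g(C) ≥ I` is then the weighted AM–GM inequality `xᵗ ≤ 1 - t + t x` on the spectrum of `C`.
If the two means coincide, uniqueness gives `g(C) = I`, and strict AM–GM for `x ≠ 1` forces
`C = I`, that is `B = A`.
-/

open scoped MatrixOrder

namespace Matrix

variable {m 𝕜 : Type*} [Fintype m] [DecidableEq m] [RCLike 𝕜]

lemma PosDef.mul_mul_same {M P : Matrix m m 𝕜} (hM : M.PosDef) (hP : P.PosDef) :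
    (P * M * P).PosDef := by
  simpa only [hP.isHermitian.eq] using
    hM.conjTranspose_mul_mul_same (mulVec_injective_iff_isUnit.mpr hP.isUnit)

lemma PosDef.spectrum_pos {A : Matrix m m 𝕜} (hA : A.PosDef) :
    ∀ x ∈ spectrum ℝ A, 0 < x :=
  (StarOrderedRing.isStrictlyPositive_iff_spectrum_pos A).mp hA.isStrictlyPositive

lemma IsHermitian.posDef_cfc {A : Matrix m m 𝕜} (hA : A.IsHermitian) {f : ℝ → ℝ}
    (hf : ∀ x ∈ spectrum ℝ A, 0 < f x) : (cfc f A).PosDef :=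
  isStrictlyPositive_iff_posDef.mp <|
    (cfc_isStrictlyPositive_iff f A (A.finite_real_spectrum.continuousOn f) hA).mpr hf

lemma IsHermitian.eq_one_of_cfc_eq_one {A : Matrix m m 𝕜} (hA : A.IsHermitian)
    {f : ℝ → ℝ} (hf : ∀ x ∈ spectrum ℝ A, f x = 1 → x = 1) (h : cfc f A = 1) : A = 1 := by
  have hf1 : (spectrum ℝ A).EqOn f 1 :=
    eqOn_of_cfc_eq_cfc (h.trans (cfc_const_one ℝ A).symm)
      (A.finite_real_spectrum.continuousOn f) (A.finite_real_spectrum.continuousOn 1) hA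
  exact CFC.eq_one_of_spectrum_subset_one A fun x hx => hf x hx (hf1 hx)

lemma IsHermitian.cfc_const_add_mul {A : Matrix m m 𝕜} (hA : A.IsHermitian) (a b : ℝ) :
    cfc (fun x : ℝ => a + b * x) A = (a : 𝕜) • (1 : Matrix m m 𝕜) + (b : 𝕜) • A := by
  refine (cfc_const_add a (b * ·) A (A.finite_real_spectrum.continuousOn _) hA).trans ?_
  rw [cfc_const_mul_id b A hA, Algebra.algebraMap_eq_smul_one, ← RCLike.real_smul_eq_coe_smul,
    ← RCLike.real_smul_eq_coe_smul]

end Matrix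

section MatrixPower

variable {n : ℕ} {A : Matrix (Fin n) (Fin n) ℂ}

lemma Matrix.PosDef.mpow (hA : A.PosDef) (t : ℝ) : (mpow A t).PosDef :=
  hA.isHermitian.posDef_cfc fun x hx => Real.rpow_pos_of_pos (hA.spectrum_pos x hx) t

lemma mpow_mul_mpow (hA : A.PosDef) (s t : ℝ) : mpow A s * mpow A t = mpow A (s + t) := by
  rw [mpow, mpow, ← cfc_mul _ _ A (A.finite_real_spectrum.continuousOn _)
    (A.finite_real_spectrum.continuousOn _)]
  exact cfc_congr fun x hx => (Real.rpow_add (hA.spectrum_pos x hx) s t).symm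

lemma mpow_zero (hA : A.IsHermitian) : mpow A 0 = 1 := by
  simp only [mpow, Real.rpow_zero]
  exact cfc_const_one ℝ A hA

lemma mpow_one (hA : A.IsHermitian) : mpow A 1 = A := by
  simp only [mpow, Real.rpow_one]
  exact cfc_id' ℝ A hA

lemma one_mpow (t : ℝ) : mpow (1 : Matrix (Fin n) (Fin n) ℂ) t = 1 := by
  simp [mpow, cfc_apply_one]

lemma mpow_mul_mpow_neg (hA : A.PosDef) (t : ℝ) : mpow A t * mpow A (-t) = 1 := by
  rw [mpow_mul_mpow hA, add_neg_cancel, mpow_zero hA.isHermitian]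

lemma mpow_neg_mul_mpow (hA : A.PosDef) (t : ℝ) : mpow A (-t) * mpow A t = 1 := by
  rw [mpow_mul_mpow hA, neg_add_cancel, mpow_zero hA.isHermitian]

lemma mpow_half_mul_mpow_half (hA : A.PosDef) : mpow A (1/2) * mpow A (1/2) = A := by
  rw [mpow_mul_mpow hA, add_halves, mpow_one hA.isHermitian]

lemma eq_mpow_half_of_mul_self_eq {W : Matrix (Fin n) (Fin n) ℂ} (hA : A.PosDef) (hW : W.PosDef)
    (h : W * W = A) : W = mpow A (1/2) :=
  (CFC.mul_self_eq_mul_self_iff W _ hW.posSemidef.nonneg (hA.mpow _).posSemidef.nonneg).mp <| by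
    rw [h, mpow_half_mul_mpow_half hA]

end MatrixPower

section GeometricMean

variable {n : ℕ} {X Y Z : Matrix (Fin n) (Fin n) ℂ}

lemma inv_eq_mpow_neg_half_mul (hX : X.PosDef) : X⁻¹ = mpow X (-(1/2)) * mpow X (-(1/2)) := by
  refine Matrix.inv_eq_left_inv ?_
  have hNP : mpow X (-(1/2)) * mpow X (1/2) = 1 := mpow_neg_mul_mpow hX _
  calc mpow X (-(1/2)) * mpow X (-(1/2)) * X
      = mpow X (-(1/2)) * mpow X (-(1/2)) * (mpow X (1/2) * mpow X (1/2)) := by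
        rw [mpow_half_mul_mpow_half hX]
    _ = mpow X (-(1/2)) * (mpow X (-(1/2)) * mpow X (1/2)) * mpow X (1/2) := by
        simp only [mul_assoc]
    _ = 1 := by rw [hNP, mul_one, hNP]

lemma Matrix.PosDef.gmean_half (hX : X.PosDef) (hY : Y.PosDef) : (gmean X Y (1/2)).PosDef :=
  ((hY.mul_mul_same (hX.mpow _)).mpow _).mul_mul_same (hX.mpow _)

lemma gmean_half_mul_inv_mul_gmean_half (hX : X.PosDef) (hY : Y.PosDef) :
    gmean X Y (1/2) * X⁻¹ * gmean X Y (1/2) = Y := by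
  set P := mpow X (1/2)
  set N := mpow X (-(1/2))
  set R := mpow (N * Y * N) (1/2)
  have hPN : P * N = 1 := mpow_mul_mpow_neg hX _
  have hNP : N * P = 1 := mpow_neg_mul_mpow hX _
  have hXinv : X⁻¹ = N * N := inv_eq_mpow_neg_half_mul hX
  have hR : R * R = N * Y * N := mpow_half_mul_mpow_half (hY.mul_mul_same (hX.mpow _))
  calc P * R * P * X⁻¹ * (P * R * P) = P * R * (P * N) * (N * P) * R * P := by
        rw [hXinv]; simp only [mul_assoc]
    _ = P * (R * R) * P := by rw [hPN, hNP]; simp only [mul_one, mul_assoc]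
    _ = (P * N) * Y * (N * P) := by rw [hR]; simp only [mul_assoc]
    _ = Y := by rw [hPN, hNP, one_mul, mul_one]

lemma gmean_half_eq_of_mul_inv_mul (hX : X.PosDef) (hY : Y.PosDef) (hZ : Z.PosDef)
    (h : Z * X⁻¹ * Z = Y) : gmean X Y (1/2) = Z := by
  set P := mpow X (1/2)
  set N := mpow X (-(1/2))
  have hPN : P * N = 1 := mpow_mul_mpow_neg hX _
  have hNP : N * P = 1 := mpow_neg_mul_mpow hX _
  have hXinv : X⁻¹ = N * N := inv_eq_mpow_neg_half_mul hX
  have hV : N * Z * N = mpow (N * Y * N) (1/2) := by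
    refine eq_mpow_half_of_mul_self_eq (hY.mul_mul_same (hX.mpow _))
      (hZ.mul_mul_same (hX.mpow _)) ?_
    rw [← h, hXinv]; simp only [mul_assoc]
  calc gmean X Y (1/2) = P * (N * Z * N) * P := by rw [hV]; rfl
    _ = (P * N) * Z * (N * P) := by simp only [mul_assoc]
    _ = Z := by rw [hPN, hNP, one_mul, mul_one]

lemma gmean_half_inv_eq_of_mul_mul (hX : X.PosDef) (hY : Y.PosDef) (hZ : Z.PosDef)
    (h : Z * X * Z = Y) : gmean X⁻¹ Y (1/2) = Z :=
  gmean_half_eq_of_mul_inv_mul hX.inv hY hZ <| by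
    rwa [Matrix.nonsing_inv_nonsing_inv X ((Matrix.isUnit_iff_isUnit_det X).mp hX.isUnit)]

lemma gmean_half_inv_self (hX : X.PosDef) : gmean X⁻¹ X (1/2) = 1 :=
  gmean_half_inv_eq_of_mul_mul hX hX .one (by rw [one_mul, mul_one])

lemma eq_one_of_mul_mul_eq_self (hX : X.PosDef) (hZ : Z.PosDef) (h : Z * X * Z = X) : Z = 1 :=
  (gmean_half_inv_eq_of_mul_mul hX hX hZ h).symm.trans (gmean_half_inv_self hX)

end GeometricMean

section AMGM

variable {t x : ℝ}

/-- `amgmRatio t x = ((1 - t) * 1 + t * x) / (1 ^ (1 - t) * x ^ t)` is the ratio of the weighted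
arithmetic and geometric means of `1` and `x`. -/
def amgmRatio (t x : ℝ) : ℝ := (1 - t + t * x) * x ^ (-t)

lemma amgmRatio_mul_rpow (hx : 0 < x) : amgmRatio t x * x ^ t = 1 - t + t * x := by
  rw [amgmRatio, mul_assoc, ← Real.rpow_add hx, neg_add_cancel, Real.rpow_zero, mul_one]

lemma one_le_amgmRatio (hx : 0 < x) (ht₀ : 0 ≤ t) (ht₁ : t ≤ 1) : 1 ≤ amgmRatio t x := by
  have h := rpow_one_add_le_one_add_mul_self (s := x - 1) (by linarith) ht₀ ht₁
  rw [add_sub_cancel] at h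
  rw [amgmRatio, Real.rpow_neg hx.le, le_mul_inv_iff₀ (Real.rpow_pos_of_pos hx t), one_mul]
  linarith

lemma one_lt_amgmRatio (hx : 0 < x) (hx₁ : x ≠ 1) (ht₀ : 0 < t) (ht₁ : t < 1) :
    1 < amgmRatio t x := by
  have h := rpow_one_add_lt_one_add_mul_self (s := x - 1) (by linarith) (sub_ne_zero.mpr hx₁)
    ht₀ ht₁
  rw [add_sub_cancel] at h
  rw [amgmRatio, Real.rpow_neg hx.le, lt_mul_inv_iff₀ (Real.rpow_pos_of_pos hx t), one_mul]
  linarith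

end AMGM

section Means

variable {n : ℕ} {A B : Matrix (Fin n) (Fin n) ℂ} {t : ℝ}

lemma gmean_half_inv_mul_mul_gmean_half (hA : A.PosDef) (hB : B.PosDef) :
    gmean A⁻¹ B (1/2) * A * gmean A⁻¹ B (1/2) = B := by
  simpa only [Matrix.nonsing_inv_nonsing_inv A ((Matrix.isUnit_iff_isUnit_det A).mp hA.isUnit)]
    using gmean_half_mul_inv_mul_gmean_half hA.inv hB

lemma wmean_eq_cfc_mul_mul_cfc (hA : A.PosDef) (hB : B.PosDef) (t : ℝ) :
    wmean A B t = cfc (fun x : ℝ => 1 - t + t * x) (gmean A⁻¹ B (1/2)) * A *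
      cfc (fun x : ℝ => 1 - t + t * x) (gmean A⁻¹ B (1/2)) := by
  rw [(hA.inv.gmean_half hB).isHermitian.cfc_const_add_mul]
  rfl

lemma cfc_amgmRatio_mul_smean_mul_cfc_amgmRatio (hA : A.PosDef) (hB : B.PosDef) (t : ℝ) :
    cfc (amgmRatio t) (gmean A⁻¹ B (1/2)) * smean A B t *
      cfc (amgmRatio t) (gmean A⁻¹ B (1/2)) = wmean A B t := by
  set C := gmean A⁻¹ B (1/2)
  have hC : C.PosDef := hA.inv.gmean_half hB
  have hcont (f : ℝ → ℝ) : ContinuousOn f (spectrum ℝ C) := C.finite_real_spectrum.continuousOn f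
  have hsplit : cfc (fun x : ℝ => 1 - t + t * x) C = cfc (amgmRatio t) C * mpow C t := by
    rw [mpow, ← cfc_mul _ _ C (hcont _) (hcont _)]
    exact cfc_congr fun x hx => (amgmRatio_mul_rpow (hC.spectrum_pos x hx)).symm
  have hsplit' : cfc (fun x : ℝ => 1 - t + t * x) C = mpow C t * cfc (amgmRatio t) C := by
    rw [mpow, ← cfc_mul _ _ C (hcont _) (hcont _)]
    exact cfc_congr fun x hx =>
      (amgmRatio_mul_rpow (hC.spectrum_pos x hx)).symm.trans (mul_comm _ _)
  calc cfc (amgmRatio t) C * (mpow C t * A * mpow C t) * cfc (amgmRatio t) C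
      = (cfc (amgmRatio t) C * mpow C t) * A * (mpow C t * cfc (amgmRatio t) C) := by
        simp only [mul_assoc]
    _ = wmean A B t := by rw [← hsplit, ← hsplit', wmean_eq_cfc_mul_mul_cfc hA hB]

lemma Matrix.PosDef.cfc_amgmRatio (hA : A.PosDef) (hB : B.PosDef)
    (ht₀ : 0 ≤ t) (ht₁ : t ≤ 1) :
    (cfc (amgmRatio t) (gmean A⁻¹ B (1/2))).PosDef :=
  (hA.inv.gmean_half hB).isHermitian.posDef_cfc fun x hx =>
    one_pos.trans_le (one_le_amgmRatio ((hA.inv.gmean_half hB).spectrum_pos x hx) ht₀ ht₁)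

lemma Matrix.PosDef.smean (hA : A.PosDef) (hB : B.PosDef) (t : ℝ) : (smean A B t).PosDef :=
  hA.mul_mul_same ((hA.inv.gmean_half hB).mpow t)

lemma gmean_half_inv_smean_wmean (hA : A.PosDef) (hB : B.PosDef)
    (ht₀ : 0 ≤ t) (ht₁ : t ≤ 1) :
    gmean (smean A B t)⁻¹ (wmean A B t) (1/2) = cfc (amgmRatio t) (gmean A⁻¹ B (1/2)) := by
  have hZ := hA.cfc_amgmRatio hB ht₀ ht₁
  have hSZ := cfc_amgmRatio_mul_smean_mul_cfc_amgmRatio hA hB t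
  have hS := hA.smean hB t
  exact gmean_half_inv_eq_of_mul_mul hS (hSZ ▸ hS.mul_mul_same hZ) hZ hSZ

theorem nearLE_smean_wmean (hA : A.PosDef) (hB : B.PosDef) (ht₀ : 0 ≤ t) (ht₁ : t ≤ 1) :
    NearLE (smean A B t) (wmean A B t) := by
  change 1 ≤ gmean (smean A B t)⁻¹ (wmean A B t) (1/2)
  rw [gmean_half_inv_smean_wmean hA hB ht₀ ht₁]
  have hC := hA.inv.gmean_half hB
  exact one_le_cfc _ _ (fun x hx => one_le_amgmRatio (hC.spectrum_pos x hx) ht₀ ht₁)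
    ((gmean A⁻¹ B (1/2)).finite_real_spectrum.continuousOn _) hC.isHermitian

lemma smean_self (hA : A.PosDef) (t : ℝ) : smean A A t = A := by
  rw [smean, gmean_half_inv_self hA, one_mpow, one_mul, mul_one]

lemma wmean_self (hA : A.PosDef) (t : ℝ) : wmean A A t = A := by
  rw [wmean, gmean_half_inv_self hA, ← add_smul, ← Complex.ofReal_add, sub_add_cancel,
    Complex.ofReal_one, one_smul, one_mul, mul_one]

theorem smean_eq_wmean_iff (hA : A.PosDef) (hB : B.PosDef) (ht₀ : 0 < t) (ht₁ : t < 1) :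
    smean A B t = wmean A B t ↔ A = B := by
  refine ⟨fun h => ?_, fun h => h ▸ (smean_self hA t).trans (wmean_self hA t).symm⟩
  have hC := hA.inv.gmean_half hB
  have hZ : cfc (amgmRatio t) (gmean A⁻¹ B (1/2)) = 1 :=
    eq_one_of_mul_mul_eq_self (hA.smean hB t) (hA.cfc_amgmRatio hB ht₀.le ht₁.le)
      ((cfc_amgmRatio_mul_smean_mul_cfc_amgmRatio hA hB t).trans h.symm)
  have hC₁ : gmean A⁻¹ B (1/2) = 1 := hC.isHermitian.eq_one_of_cfc_eq_one
    (fun x hx hx₁ => by_contra fun hne =>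
      (one_lt_amgmRatio (hC.spectrum_pos x hx) hne ht₀ ht₁).ne' hx₁) hZ
  rw [← gmean_half_inv_mul_mul_gmean_half hA hB, hC₁, one_mul, mul_one]

end Means

/-- `A ♮ₜ B ⪯ A ◇ₜ B` for all `t ∈ (0,1)`, and equality holds iff `A = B`. -/
theorem smean_near_le_wmean {n : ℕ} (A B : Matrix (Fin n) (Fin n) ℂ)
    (hA : A.PosDef) (hB : B.PosDef) :
    (∀ t : ℝ, 0 < t → t < 1 → NearLE (smean A B t) (wmean A B t)) ∧
    (∀ t : ℝ, 0 < t → t < 1 → (smean A B t = wmean A B t ↔ A = B)) :=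
  ⟨fun _ ht₀ ht₁ => nearLE_smean_wmean hA hB ht₀.le ht₁.le,
    fun _ ht₀ ht₁ => smean_eq_wmean_iff hA hB ht₀ ht₁⟩
end
end

section
/- Let A, B be n×n complex positive definite matrices. (1) If A ⪯ B in the near order, then for every t ∈ (1, ∞): A ◇_t B ⪯ A ♮_t B. (2) If B ⪯ A in the near order, then for every t ∈ (−∞, 0): A ◇_t B ⪯ A ♮_t B. In either case, equality A ◇_t B = A ♮_t B holds if and only if A = B. -/
open scoped ComplexOrder Matrix

noncomputable section

/-! Write `C = A⁻¹ ♯ B`; it is the unique positive definite solution of the Riccati equation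
`C A C = B`. Both means are congruences of `A` by functions of `C`: `A ◇ₜ B = w(C) A w(C)` with
`w(x) = 1 - t + t x`, and `A ♮ₜ B = Cᵗ A Cᵗ`. When `w > 0` on the spectrum of `C`, uniqueness of
the Riccati solution gives `(A ◇ₜ B)⁻¹ ♯ (A ♮ₜ B) = g(C)` with `g(x) = xᵗ / w(x)`. The near-order
hypothesis puts the spectrum of `C` in `[1, ∞)` (resp. `(0, 1]`), where `w ≥ 1` for `t > 1`
(resp. `t < 0`), and Bernoulli's inequality `w(x) ≤ xᵗ` for `t ∉ [0, 1]`, strict unless `x = 1`,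
gives `g(C) ≥ I`, with `g(C) = I` only if `C = I`, i.e. `A = B`. -/

open scoped MatrixOrder
open Matrix

theorem one_sub_add_mul_lt_rpow {t x : ℝ} (ht : t < 0 ∨ 1 < t) (hx : 0 < x) (hx1 : x ≠ 1) :
    1 - t + t * x < x ^ t := by
  rcases ht with ht | ht
  · -- Bernoulli with exponent `1 - t > 1` at `x⁻¹`, multiplied by `x`
    have h := one_add_mul_self_lt_rpow_one_add (s := x⁻¹ - 1) (by linarith [inv_pos.2 hx])
      (sub_ne_zero.2 (inv_ne_one.2 hx1)) (by linarith : 1 < 1 - t)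
    rw [add_sub_cancel, Real.inv_rpow hx.le, ← Real.rpow_neg hx.le, neg_sub,
      Real.rpow_sub_one hx.ne'] at h
    calc 1 - t + t * x = x * (1 + (1 - t) * (x⁻¹ - 1)) := by field_simp; ring
      _ < x * (x ^ t / x) := by gcongr
      _ = x ^ t := mul_div_cancel₀ _ hx.ne'
  · have h := one_add_mul_self_lt_rpow_one_add (s := x - 1) (by linarith) (sub_ne_zero.2 hx1) ht
    rw [add_sub_cancel] at h
    linarith

theorem one_sub_add_mul_le_rpow {t x : ℝ} (ht : t < 0 ∨ 1 < t) (hx : 0 < x) :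
    1 - t + t * x ≤ x ^ t := by
  rcases eq_or_ne x 1 with rfl | hx1
  · simp
  · exact (one_sub_add_mul_lt_rpow ht hx hx1).le

lemma mul_mul_mul_cancel_of_mul_eq_one {M : Type*} [Monoid M] {s t : M} (hts : t * s = 1)
    (hst : s * t = 1) (m : M) : t * (s * m * s) * t = m := by
  simp only [← mul_assoc, hts, one_mul]
  rw [mul_assoc, hst, mul_one]

section

variable {n : ℕ}

lemma mpow_eq_rpow {A : Matrix (Fin n) (Fin n) ℂ} (hA : A.PosSemidef) (t : ℝ) :
    mpow A t = A ^ t := by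
  rw [CFC.rpow_eq_cfc_real hA.nonneg]
  rfl

lemma inv_eq_mpow_neg_one {A : Matrix (Fin n) (Fin n) ℂ} (hA : A.PosDef) :
    A⁻¹ = mpow A (-1) := by
  have hA' := hA.isStrictlyPositive
  rw [mpow_eq_rpow hA.posSemidef, nonsing_inv_eq_ringInverse, CFC.inverse_eq_rpow_neg_one]

lemma mpow_inv {A : Matrix (Fin n) (Fin n) ℂ} (hA : A.PosDef) (t : ℝ) :
    mpow A⁻¹ t = A ^ (-t) := by
  have hA' := hA.isStrictlyPositive
  rw [mpow_eq_rpow hA.inv.posSemidef, nonsing_inv_eq_ringInverse, CFC.inverse_eq_rpow_neg_one,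
    CFC.rpow_rpow _ _ _ (by norm_num), neg_one_mul]

lemma isSelfAdjoint_mpow (A : Matrix (Fin n) (Fin n) ℂ) (t : ℝ) : IsSelfAdjoint (mpow A t) :=
  cfc_predicate _ _

lemma continuousOn_rpow_spectrum {A : Matrix (Fin n) (Fin n) ℂ} (hA : A.PosDef) (t : ℝ) :
    ContinuousOn (fun x : ℝ => x ^ t) (spectrum ℝ A) :=
  continuousOn_id.rpow_const fun _ hx => Or.inl (hA.isStrictlyPositive.spectrum_pos hx).ne'

lemma cfc_one_sub_add_mul {C : Matrix (Fin n) (Fin n) ℂ} (hC : IsSelfAdjoint C) (t : ℝ) :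
    cfc (fun x : ℝ => 1 - t + t * x) C = ((1 - t : ℝ) : ℂ) • 1 + ((t : ℝ) : ℂ) • C := by
  rw [cfc_const_add _ _ C, cfc_const_mul_id _ C, Complex.coe_smul, Complex.coe_smul,
    Algebra.algebraMap_eq_smul_one]

lemma isSelfAdjoint_gmean (A B : Matrix (Fin n) (Fin n) ℂ) (t : ℝ) :
    IsSelfAdjoint (gmean A B t) := by
  simpa only [gmean, (isSelfAdjoint_mpow A _).star_eq] using
    (isSelfAdjoint_mpow (mpow A (-(1/2)) * B * mpow A (-(1/2))) t).conjugate (mpow A (1/2))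

lemma rpow_half_mul_rpow_half {A : Matrix (Fin n) (Fin n) ℂ} (hA : 0 ≤ A) :
    A ^ (1/2 : ℝ) * A ^ (1/2 : ℝ) = A := by
  rw [← CFC.sqrt_eq_rpow, CFC.sqrt_mul_sqrt_self A]

lemma gmean_inv_half_eq {A B : Matrix (Fin n) (Fin n) ℂ} (hA : A.PosDef) (hB : 0 ≤ B) :
    gmean A⁻¹ B (1/2) =
      A ^ (-(1/2) : ℝ) * CFC.sqrt (A ^ (1/2 : ℝ) * B * A ^ (1/2 : ℝ)) * A ^ (-(1/2) : ℝ) := by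
  have hSBS : 0 ≤ A ^ (1/2 : ℝ) * B * A ^ (1/2 : ℝ) :=
    (IsSelfAdjoint.of_nonneg CFC.rpow_nonneg).conjugate_nonneg hB
  rw [gmean, mpow_inv hA, mpow_inv hA, neg_neg, mpow_eq_rpow hSBS.posSemidef, CFC.sqrt_eq_rpow]

theorem gmean_inv_eq_of_mul_mul_eq {X G Y : Matrix (Fin n) (Fin n) ℂ} (hX : X.PosDef)
    (hG : G.PosDef) (h : G * X * G = Y) : gmean X⁻¹ Y (1/2) = G := by
  have hX' := hX.isStrictlyPositive
  set S := X ^ (1/2 : ℝ)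
  have hSGS : 0 ≤ S * G * S :=
    (IsSelfAdjoint.of_nonneg CFC.rpow_nonneg).conjugate_nonneg hG.posSemidef.nonneg
  have hSS : S * S = X := rpow_half_mul_rpow_half hX'.nonneg
  have hSYS : S * Y * S = (S * G * S) * (S * G * S) := by
    rw [← h, ← hSS]
    simp only [mul_assoc]
  rw [gmean_inv_half_eq hX (h ▸ hG.isHermitian.isSelfAdjoint.conjugate_nonneg hX'.nonneg), hSYS,
    CFC.sqrt_mul_self _ hSGS,
    mul_mul_mul_cancel_of_mul_eq_one (CFC.rpow_neg_mul_rpow _) (CFC.rpow_mul_rpow_neg _)]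

lemma posDef_gmean_inv {A B : Matrix (Fin n) (Fin n) ℂ} (hA : A.PosDef) (hB : B.PosDef) :
    (gmean A⁻¹ B (1/2)).PosDef := by
  have hA' := hA.isStrictlyPositive
  have hT := (IsStrictlyPositive.rpow A (-(1/2)) hA').isUnit
  have hSBS : IsStrictlyPositive (A ^ (1/2 : ℝ) * B * A ^ (1/2 : ℝ)) :=
    hB.isStrictlyPositive.conjugate_of_isUnit_of_isSelfAdjoint _ _
      (IsStrictlyPositive.rpow A _ hA').isUnit
  rw [gmean_inv_half_eq hA hB.posSemidef.nonneg]
  exact (hSBS.sqrt.conjugate_of_isUnit_of_isSelfAdjoint _ _ hT).posDef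

lemma gmean_inv_mul_mul {A B : Matrix (Fin n) (Fin n) ℂ} (hA : A.PosDef) (hB : 0 ≤ B) :
    gmean A⁻¹ B (1/2) * A * gmean A⁻¹ B (1/2) = B := by
  have hA' := hA.isStrictlyPositive
  set S := A ^ (1/2 : ℝ)
  set T := A ^ (-(1/2) : ℝ)
  set Q := CFC.sqrt (S * B * S)
  have hTS : T * S = 1 := CFC.rpow_neg_mul_rpow _
  have hST : S * T = 1 := CFC.rpow_mul_rpow_neg _
  have hSS : S * S = A := rpow_half_mul_rpow_half hA'.nonneg
  have hTAT : T * A * T = 1 :=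
    calc T * A * T = T * (S * 1 * S) * T := by rw [mul_one, hSS]
      _ = 1 := mul_mul_mul_cancel_of_mul_eq_one hTS hST 1
  have hQQ : Q * Q = S * B * S :=
    CFC.sqrt_mul_sqrt_self _ ((IsSelfAdjoint.of_nonneg CFC.rpow_nonneg).conjugate_nonneg hB)
  rw [gmean_inv_half_eq hA hB]
  calc T * Q * T * A * (T * Q * T) = T * (Q * (T * A * T) * Q) * T := by simp only [mul_assoc]
    _ = B := by rw [hTAT, mul_one, hQQ, mul_mul_mul_cancel_of_mul_eq_one hTS hST]

lemma gmean_inv_self {A : Matrix (Fin n) (Fin n) ℂ} (hA : A.PosDef) : gmean A⁻¹ A (1/2) = 1 :=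
  gmean_inv_eq_of_mul_mul_eq hA PosDef.one (by rw [one_mul, mul_one])

lemma gmean_inv_swap {A B : Matrix (Fin n) (Fin n) ℂ} (hA : A.PosDef) (hB : B.PosDef) :
    gmean B⁻¹ A (1/2) = (gmean A⁻¹ B (1/2))⁻¹ := by
  have hC := posDef_gmean_inv hA hB
  have hCAC := gmean_inv_mul_mul hA hB.posSemidef.nonneg
  set C := gmean A⁻¹ B (1/2)
  have hdet : IsUnit C.det := (isUnit_iff_isUnit_det _).mp hC.isUnit
  refine gmean_inv_eq_of_mul_mul_eq hB hC.inv ?_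
  rw [← hCAC, ← mul_assoc, ← mul_assoc, nonsing_inv_mul _ hdet, one_mul,
    mul_nonsing_inv_cancel_right C A hdet]

lemma nearLE_iff_one_le_spectrum {A B : Matrix (Fin n) (Fin n) ℂ} :
    NearLE A B ↔ ∀ x ∈ spectrum ℝ (gmean A⁻¹ B (1/2)), 1 ≤ x :=
  CFC.one_le_iff _ (isSelfAdjoint_gmean _ _ _)

lemma nearLE_swap_iff_spectrum_le_one {A B : Matrix (Fin n) (Fin n) ℂ} (hA : A.PosDef)
    (hB : B.PosDef) : NearLE B A ↔ ∀ x ∈ spectrum ℝ (gmean A⁻¹ B (1/2)), x ≤ 1 := by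
  have hC := posDef_gmean_inv hA hB
  change 1 ≤ gmean B⁻¹ A (1/2) ↔ _
  rw [gmean_inv_swap hA hB, inv_eq_mpow_neg_one hC, mpow,
    one_le_cfc_iff _ _ (continuousOn_rpow_spectrum hC _) hC.isHermitian.isSelfAdjoint]
  refine forall₂_congr fun x hx => ?_
  have hx0 : 0 < x := hC.isStrictlyPositive.spectrum_pos hx
  rw [Real.rpow_neg_one, one_le_inv₀ hx0]

lemma wmean_self_eq_smean_self {A : Matrix (Fin n) (Fin n) ℂ} (hA : A.PosDef) (t : ℝ) :
    wmean A A t = smean A A t := by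
  rw [wmean, smean, gmean_inv_self hA, mpow_eq_rpow PosSemidef.one, CFC.one_rpow,
    Complex.coe_smul, Complex.coe_smul, ← add_smul, sub_add_cancel, one_smul, one_mul, mul_one]

section Outside

variable {A B : Matrix (Fin n) (Fin n) ℂ} {t : ℝ}

lemma wmean_eq_cfc_mul_mul :
    wmean A B t = cfc (fun x : ℝ => 1 - t + t * x) (gmean A⁻¹ B (1/2)) * A *
      cfc (fun x : ℝ => 1 - t + t * x) (gmean A⁻¹ B (1/2)) := by
  rw [wmean, cfc_one_sub_add_mul (isSelfAdjoint_gmean _ _ _)]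

lemma posDef_wmean (hA : A.PosDef)
    (hw : ∀ x ∈ spectrum ℝ (gmean A⁻¹ B (1/2)), 0 < 1 - t + t * x) : (wmean A B t).PosDef := by
  have hE := (cfc_isStrictlyPositive_iff (fun x : ℝ => 1 - t + t * x) _ (by fun_prop)
    (isSelfAdjoint_gmean _ _ _)).2 hw
  rw [wmean_eq_cfc_mul_mul]
  exact (hA.isStrictlyPositive.conjugate_of_isUnit_of_isSelfAdjoint _ _ hE.isUnit).posDef

variable (hA : A.PosDef) (hB : B.PosDef)
  (hw : ∀ x ∈ spectrum ℝ (gmean A⁻¹ B (1/2)), 0 < 1 - t + t * x)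
include hA hB hw

lemma continuousOn_rpow_div_spectrum :
    ContinuousOn (fun x : ℝ => x ^ t / (1 - t + t * x)) (spectrum ℝ (gmean A⁻¹ B (1/2))) :=
  (continuousOn_rpow_spectrum (posDef_gmean_inv hA hB) t).div (by fun_prop) fun x hx =>
    (hw x hx).ne'

theorem gmean_inv_wmean_smean :
    gmean (wmean A B t)⁻¹ (smean A B t) (1/2) =
      cfc (fun x : ℝ => x ^ t / (1 - t + t * x)) (gmean A⁻¹ B (1/2)) := by
  have hC := posDef_gmean_inv hA hB
  have hcont := continuousOn_rpow_div_spectrum hA hB hw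
  set C := gmean A⁻¹ B (1/2)
  set G := cfc (fun x : ℝ => x ^ t / (1 - t + t * x)) C
  set E := cfc (fun x : ℝ => 1 - t + t * x) C
  have hG : IsStrictlyPositive G := (cfc_isStrictlyPositive_iff _ C).2 fun x hx =>
    div_pos (Real.rpow_pos_of_pos (hC.isStrictlyPositive.spectrum_pos hx) t) (hw x hx)
  have hGE : G * E = mpow C t := by
    rw [← cfc_mul _ _ C]
    exact cfc_congr fun x hx => div_mul_cancel₀ _ (hw x hx).ne'
  have hEG : E * G = mpow C t := by
    rw [← hGE]
    exact (cfc_commute_cfc _ _ C).symm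
  have hW : wmean A B t = E * A * E := wmean_eq_cfc_mul_mul
  refine gmean_inv_eq_of_mul_mul_eq (posDef_wmean hA hw) hG.posDef ?_
  calc G * wmean A B t * G = (G * E) * A * (E * G) := by rw [hW]; simp only [mul_assoc]
    _ = smean A B t := by rw [hGE, hEG]; rfl

theorem nearLE_wmean_smean (ht : t < 0 ∨ 1 < t) : NearLE (wmean A B t) (smean A B t) := by
  have hC := posDef_gmean_inv hA hB
  change 1 ≤ gmean _ _ _
  rw [gmean_inv_wmean_smean hA hB hw]
  refine one_le_cfc _ _ (fun x hx => (one_le_div (hw x hx)).2 ?_)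
    (continuousOn_rpow_div_spectrum hA hB hw) hC.isHermitian.isSelfAdjoint
  exact one_sub_add_mul_le_rpow ht (hC.isStrictlyPositive.spectrum_pos hx)

theorem eq_of_wmean_eq_smean (ht : t < 0 ∨ 1 < t) (h : wmean A B t = smean A B t) : A = B := by
  have hC := posDef_gmean_inv hA hB
  have hCsa := hC.isHermitian.isSelfAdjoint
  have hg : cfc (fun x : ℝ => x ^ t / (1 - t + t * x)) (gmean A⁻¹ B (1/2)) =
      cfc (fun _ : ℝ => 1) (gmean A⁻¹ B (1/2)) := by
    rw [← gmean_inv_wmean_smean hA hB hw, ← h, gmean_inv_self (posDef_wmean hA hw),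
      cfc_const_one ℝ _ hCsa]
  have hC1 : gmean A⁻¹ B (1/2) = 1 := by
    refine CFC.eq_one_of_spectrum_subset_one (R := ℝ) _ (fun x hx => ?_) hCsa
    have hgx := eqOn_of_cfc_eq_cfc hg (continuousOn_rpow_div_spectrum hA hB hw)
      continuousOn_const hCsa hx
    by_contra hne
    exact (one_sub_add_mul_lt_rpow ht (hC.isStrictlyPositive.spectrum_pos hx) hne).ne
      ((div_eq_one_iff_eq (hw x hx).ne').1 hgx).symm
  rw [← gmean_inv_mul_mul hA hB.posSemidef.nonneg, hC1, one_mul, mul_one]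

theorem wmean_eq_smean_iff (ht : t < 0 ∨ 1 < t) : wmean A B t = smean A B t ↔ A = B := by
  refine ⟨eq_of_wmean_eq_smean hA hB hw ht, ?_⟩
  rintro rfl
  exact wmean_self_eq_smean_self hA t

end Outside

end

/-- (1) if `A ⪯ B` then `A ◇ₜ B ⪯ A ♮ₜ B` for `t ∈ (1,∞)`;
(2) if `B ⪯ A` then `A ◇ₜ B ⪯ A ♮ₜ B` for `t ∈ (−∞,0)`;
in either case equality holds iff `A = B`. -/
theorem wmean_near_le_smean_outside {n : ℕ} (A B : Matrix (Fin n) (Fin n) ℂ)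
    (hA : A.PosDef) (hB : B.PosDef) :
    (NearLE A B → ∀ t : ℝ, 1 < t → NearLE (wmean A B t) (smean A B t)) ∧
    (NearLE B A → ∀ t : ℝ, t < 0 → NearLE (wmean A B t) (smean A B t)) ∧
    (NearLE A B → ∀ t : ℝ, 1 < t → (wmean A B t = smean A B t ↔ A = B)) ∧
    (NearLE B A → ∀ t : ℝ, t < 0 → (wmean A B t = smean A B t ↔ A = B)) := by
  have outside {t : ℝ} (ht : t < 0 ∨ 1 < t)
      (hw : ∀ x ∈ spectrum ℝ (gmean A⁻¹ B (1/2)), 0 < 1 - t + t * x) :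
      NearLE (wmean A B t) (smean A B t) ∧ (wmean A B t = smean A B t ↔ A = B) :=
    ⟨nearLE_wmean_smean hA hB hw ht, wmean_eq_smean_iff hA hB hw ht⟩
  have above (h : NearLE A B) (t : ℝ) (ht : 1 < t) := outside (Or.inr ht) fun x hx => by
    nlinarith [nearLE_iff_one_le_spectrum.1 h x hx]
  have below (h : NearLE B A) (t : ℝ) (ht : t < 0) := outside (Or.inl ht) fun x hx => by
    nlinarith [(nearLE_swap_iff_spectrum_le_one hA hB).1 h x hx]
  exact ⟨fun h t ht => (above h t ht).1, fun h t ht => (below h t ht).1,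
    fun h t ht => (above h t ht).2, fun h t ht => (below h t ht).2⟩
end
end
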